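/- The GLMGA(σ,a,b) distribution function F is regularly varying at 0 with index a/σ: lim_{t→0+} F(ty)/F(t) = y^{a/σ} for all y > 0. -/

import Mathlib

open Real MeasureTheory Filter

/-- Beta function as an integral. -/
noncomputable def betaFn (m n : ℝ) : ℝ := ∫ t in (0:ℝ)..1, t ^ (m - 1) * (1 - t) ^ (n - 1)

/-- Regularized incomplete Beta function. -/
noncomputable def regIncBeta (m n x : ℝ) : ℝ :=
  (∫ t in (0:ℝ)..x, t ^ (m - 1) * (1 - t) ^ (n - 1)) / betaFn m n

/-- GLMGA(σ,a,b) cumulative distribution function (closed form). -/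
noncomputable def glmgaCdf (σ a b y : ℝ) : ℝ :=
  1 - regIncBeta (1/2) a (y ^ (-(1 / σ)) / (y ^ (-(1 / σ)) + 2 * b))

namespace GlmgaAux

/-- reflected integrand -/
noncomputable def g (a s : ℝ) : ℝ := (1 - s) ^ ((1:ℝ)/2 - 1) * s ^ (a - 1)

/-- original integrand -/
noncomputable def f' (a t : ℝ) : ℝ := t ^ ((1:ℝ)/2 - 1) * (1 - t) ^ (a - 1)

/-- lower incomplete (reflected) beta integral -/
noncomputable def H (a v : ℝ) : ℝ := ∫ s in (0:ℝ)..v, g a s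

lemma g_meas (a : ℝ) : Measurable (g a) :=
  ((measurable_const.sub measurable_id).pow measurable_const).mul
    (measurable_id.pow measurable_const)

lemma f'_meas (a : ℝ) : Measurable (f' a) :=
  (measurable_id.pow measurable_const).mul
    ((measurable_const.sub measurable_id).pow measurable_const)

lemma g_reflect (a : ℝ) : (fun s : ℝ => g a (1 - s)) = f' a := by
  funext s
  simp [g, f']

lemma f'_reflect (a : ℝ) : (fun s : ℝ => f' a (1 - s)) = g a := by
  funext s
  simp [g, f']

lemma g_int {a : ℝ} (ha : 0 < a) {v : ℝ} (hv0 : 0 ≤ v) (hv1 : v < 1) :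
    IntervalIntegrable (g a) volume 0 v := by
  have hmaj : IntervalIntegrable (fun s : ℝ => (1 - v) ^ ((1:ℝ)/2 - 1) * s ^ (a - 1))
      volume 0 v :=
    (intervalIntegral.intervalIntegrable_rpow' (by linarith)).const_mul _
  refine hmaj.mono_fun ((g_meas a).aestronglyMeasurable) ?_
  filter_upwards [ae_restrict_mem measurableSet_uIoc] with s hs
  rw [Set.uIoc_of_le hv0] at hs
  have hs0 : 0 < s := hs.1
  have hsv : s ≤ v := hs.2
  have h1v : 0 < 1 - v := by linarith
  have h1s : 0 < 1 - s := by linarith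
  have hbnd : (1 - s) ^ ((1:ℝ)/2 - 1) ≤ (1 - v) ^ ((1:ℝ)/2 - 1) :=
    Real.rpow_le_rpow_of_nonpos h1v (by linarith) (by norm_num)
  have hnn1 : 0 ≤ g a s :=
    mul_nonneg (Real.rpow_nonneg h1s.le _) (Real.rpow_nonneg hs0.le _)
  have hnn2 : 0 ≤ (1 - v) ^ ((1:ℝ)/2 - 1) * s ^ (a - 1) :=
    mul_nonneg (Real.rpow_nonneg h1v.le _) (Real.rpow_nonneg hs0.le _)
  rw [Real.norm_eq_abs, Real.norm_eq_abs, abs_of_nonneg hnn1, abs_of_nonneg hnn2]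
  exact mul_le_mul_of_nonneg_right hbnd (Real.rpow_nonneg hs0.le _)

lemma f'_int0 {a : ℝ} (ha : 0 < a) {x : ℝ} (hx0 : 0 ≤ x) (hx1 : x < 1) :
    IntervalIntegrable (f' a) volume 0 x := by
  set C : ℝ := max ((1 - x) ^ (a - 1)) 1 with hC
  have hmaj : IntervalIntegrable (fun t : ℝ => C * t ^ ((1:ℝ)/2 - 1)) volume 0 x :=
    (intervalIntegral.intervalIntegrable_rpow' (by norm_num)).const_mul _
  refine hmaj.mono_fun ((f'_meas a).aestronglyMeasurable) ?_
  filter_upwards [ae_restrict_mem measurableSet_uIoc] with t ht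
  rw [Set.uIoc_of_le hx0] at ht
  have ht0 : 0 < t := ht.1
  have htx : t ≤ x := ht.2
  have h1x : 0 < 1 - x := by linarith
  have h1t : 0 < 1 - t := by linarith
  have hbnd : (1 - t) ^ (a - 1) ≤ C := by
    rcases le_or_gt a 1 with h | h
    · exact le_trans (Real.rpow_le_rpow_of_nonpos h1x (by linarith) (by linarith))
        (le_max_left _ _)
    · exact le_trans (Real.rpow_le_one h1t.le (by linarith) (by linarith)) (le_max_right _ _)
  have hCn : (0:ℝ) ≤ C := le_trans zero_le_one (le_max_right _ _)
  have hnn1 : 0 ≤ f' a t :=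
    mul_nonneg (Real.rpow_nonneg ht0.le _) (Real.rpow_nonneg h1t.le _)
  have hnn2 : 0 ≤ C * t ^ ((1:ℝ)/2 - 1) :=
    mul_nonneg hCn (Real.rpow_nonneg ht0.le _)
  rw [Real.norm_eq_abs, Real.norm_eq_abs, abs_of_nonneg hnn1, abs_of_nonneg hnn2]
  calc f' a t = t ^ ((1:ℝ)/2 - 1) * (1 - t) ^ (a - 1) := rfl
    _ ≤ t ^ ((1:ℝ)/2 - 1) * C := mul_le_mul_of_nonneg_left hbnd (Real.rpow_nonneg ht0.le _)
    _ = C * t ^ ((1:ℝ)/2 - 1) := mul_comm _ _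

lemma f'_int1 {a : ℝ} (ha : 0 < a) {x : ℝ} (hx0 : 0 < x) (hx1 : x ≤ 1) :
    IntervalIntegrable (f' a) volume x 1 := by
  have h := (g_int ha (by linarith : (0:ℝ) ≤ 1 - x) (by linarith)).comp_sub_left 1
  rw [g_reflect] at h
  simpa using h.symm

lemma H_reflect {a x : ℝ} :
    H a (1 - x) = ∫ t in x..(1:ℝ), f' a t := by
  unfold H
  rw [← f'_reflect (a := a)]
  simpa using intervalIntegral.integral_comp_sub_left (f' a) 1 (a := 0) (b := 1 - x)

lemma beta_split {a : ℝ} (ha : 0 < a) {x : ℝ} (hx0 : 0 < x) (hx1 : x < 1) :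
    betaFn (1/2) a = (∫ t in (0:ℝ)..x, f' a t) + H a (1 - x) := by
  rw [H_reflect]
  exact (intervalIntegral.integral_add_adjacent_intervals
    (f'_int0 ha hx0.le hx1) (f'_int1 ha hx0 hx1.le)).symm

lemma H_lower {a : ℝ} (ha : 0 < a) {v : ℝ} (hv0 : 0 ≤ v) (hv1 : v < 1) :
    v ^ a / a ≤ H a v := by
  have hint : ∫ s in (0:ℝ)..v, s ^ (a - 1) = v ^ a / a := by
    rw [integral_rpow (Or.inl (by linarith))]
    rw [Real.zero_rpow (by linarith : a - 1 + 1 ≠ 0)]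
    norm_num
  rw [← hint]
  apply intervalIntegral.integral_mono_on hv0
    (intervalIntegral.intervalIntegrable_rpow' (by linarith)) (g_int ha hv0 hv1)
  intro s hs
  obtain ⟨hs1, hs2⟩ := hs
  have h1s : 0 < 1 - s := by linarith
  have hone : 1 ≤ (1 - s) ^ ((1:ℝ)/2 - 1) :=
    Real.one_le_rpow_of_pos_of_le_one_of_nonpos h1s (by linarith) (by norm_num)
  calc s ^ (a - 1) = 1 * s ^ (a - 1) := (one_mul _).symm
    _ ≤ (1 - s) ^ ((1:ℝ)/2 - 1) * s ^ (a - 1) :=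
      mul_le_mul_of_nonneg_right hone (Real.rpow_nonneg hs1 _)

lemma H_upper {a : ℝ} (ha : 0 < a) {v : ℝ} (hv0 : 0 ≤ v) (hv1 : v < 1) :
    H a v ≤ (1 - v) ^ ((1:ℝ)/2 - 1) * (v ^ a / a) := by
  have hint : ∫ s in (0:ℝ)..v, (1 - v) ^ ((1:ℝ)/2 - 1) * s ^ (a - 1)
      = (1 - v) ^ ((1:ℝ)/2 - 1) * (v ^ a / a) := by
    rw [intervalIntegral.integral_const_mul,
      integral_rpow (Or.inl (by linarith)),
      Real.zero_rpow (by linarith : a - 1 + 1 ≠ 0)]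
    norm_num
  rw [← hint]
  apply intervalIntegral.integral_mono_on hv0 (g_int ha hv0 hv1)
    ((intervalIntegral.intervalIntegrable_rpow' (by linarith)).const_mul _)
  intro s hs
  obtain ⟨hs1, hs2⟩ := hs
  have h1v : 0 < 1 - v := by linarith
  have hbnd : (1 - s) ^ ((1:ℝ)/2 - 1) ≤ (1 - v) ^ ((1:ℝ)/2 - 1) :=
    Real.rpow_le_rpow_of_nonpos h1v (by linarith) (by norm_num)
  exact mul_le_mul_of_nonneg_right hbnd (Real.rpow_nonneg hs1 _)

lemma H_pos {a : ℝ} (ha : 0 < a) {v : ℝ} (hv0 : 0 < v) (hv1 : v < 1) :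
    0 < H a v :=
  lt_of_lt_of_le (div_pos (Real.rpow_pos_of_pos hv0 a) ha) (H_lower ha hv0.le hv1)

lemma beta_pos {a : ℝ} (ha : 0 < a) : 0 < betaFn (1/2) a := by
  rw [beta_split ha (by norm_num : (0:ℝ) < 1/2) (by norm_num)]
  have h1 : 0 ≤ ∫ t in (0:ℝ)..(1/2:ℝ), f' a t := by
    apply intervalIntegral.integral_nonneg (by norm_num)
    intro u hu
    obtain ⟨hu1, hu2⟩ := hu
    exact mul_nonneg (Real.rpow_nonneg hu1 _) (Real.rpow_nonneg (by linarith) _)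
  have h2 : 0 < H a (1 - 1/2) := H_pos ha (by norm_num) (by norm_num)
  linarith

lemma G_tendsto {a : ℝ} (ha : 0 < a) :
    Tendsto (fun v : ℝ => H a v / v ^ a) (nhdsWithin 0 (Set.Ioi 0)) (nhds (1/a)) := by
  have hmem : Set.Ioo (0:ℝ) 1 ∈ nhdsWithin (0:ℝ) (Set.Ioi 0) :=
    Ioo_mem_nhdsGT_of_mem ⟨le_refl _, one_pos⟩
  have hupper : Tendsto (fun v : ℝ => (1 - v) ^ ((1:ℝ)/2 - 1) / a)
      (nhdsWithin 0 (Set.Ioi 0)) (nhds (1/a)) := by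
    have hc : ContinuousAt (fun v : ℝ => (1 - v) ^ ((1:ℝ)/2 - 1)) 0 := by
      apply ContinuousAt.comp (Real.continuousAt_rpow_const _ _ (Or.inl (by norm_num)))
      exact (continuous_const.sub continuous_id).continuousAt
    have h1 : Tendsto (fun v : ℝ => (1 - v) ^ ((1:ℝ)/2 - 1))
        (nhdsWithin 0 (Set.Ioi 0)) (nhds 1) := by
      have := hc.tendsto.mono_left (nhdsWithin_le_nhds (s := Set.Ioi (0:ℝ)))
      simpa using this
    exact h1.div_const a
  refine tendsto_of_tendsto_of_tendsto_of_le_of_le' tendsto_const_nhds hupper ?_ ?_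
  · filter_upwards [hmem] with v hv
    have hva : (0:ℝ) < v ^ a := Real.rpow_pos_of_pos hv.1 a
    rw [div_le_div_iff₀ ha hva]
    calc 1 * v ^ a = v ^ a / a * a := by field_simp
      _ ≤ H a v * a := mul_le_mul_of_nonneg_right (H_lower ha hv.1.le hv.2) ha.le
  · filter_upwards [hmem] with v hv
    have hva : (0:ℝ) < v ^ a := Real.rpow_pos_of_pos hv.1 a
    rw [div_le_div_iff₀ hva ha]
    calc H a v * a ≤ ((1 - v) ^ ((1:ℝ)/2 - 1) * (v ^ a / a)) * a :=
          mul_le_mul_of_nonneg_right (H_upper ha hv.1.le hv.2) ha.le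
      _ = (1 - v) ^ ((1:ℝ)/2 - 1) * v ^ a := by field_simp

lemma cdf_aux {a b : ℝ} (ha : 0 < a) (hb : 0 < b) {X : ℝ} (hX : 0 < X) :
    1 - regIncBeta (1/2) a (X / (X + 2 * b)) = H a (2 * b / (X + 2 * b)) / betaFn (1/2) a := by
  have hd : 0 < X + 2 * b := by linarith
  have hx0 : 0 < X / (X + 2 * b) := div_pos hX hd
  have hx1 : X / (X + 2 * b) < 1 := (div_lt_one hd).mpr (by linarith)
  have h1x : 1 - X / (X + 2 * b) = 2 * b / (X + 2 * b) := by field_simp; ring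
  have hkey := beta_split ha hx0 hx1
  rw [h1x] at hkey
  have hBne : betaFn (1/2) a ≠ 0 := (beta_pos ha).ne'
  rw [regIncBeta]
  rw [sub_eq_iff_eq_add, ← add_div, eq_comm, div_eq_one_iff_eq hBne, hkey, add_comm]
  rfl

end GlmgaAux

open GlmgaAux in
/-- The GLMGA cdf is regularly varying at 0 with index a/σ. -/
theorem glmga_cdf_regularly_varying_at_zero (σ a b : ℝ)
    (hσ : 0 < σ) (ha : 0 < a) (hb : 0 < b) :
    ∀ y : ℝ, 0 < y →
      Tendsto (fun t : ℝ => glmgaCdf σ a b (t * y) / glmgaCdf σ a b t)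
        (nhdsWithin 0 (Set.Ioi 0)) (nhds (y ^ (a / σ))) := by
  intro y hy
  set c : ℝ := 1 / σ with hc
  have hcpos : 0 < c := by positivity
  set B : ℝ := betaFn (1/2) a with hB
  have hBpos : 0 < B := beta_pos ha
  set u : ℝ → ℝ := fun t => 2 * b / (t ^ (-c) + 2 * b) with hu
  have hu_mem : ∀ t : ℝ, 0 < t → 0 < u t ∧ u t < 1 := by
    intro t ht
    have hX : 0 < t ^ (-c) := Real.rpow_pos_of_pos ht _
    have hd : 0 < t ^ (-c) + 2 * b := by linarith
    exact ⟨div_pos (by linarith) hd, (div_lt_one hd).mpr (by linarith)⟩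
  have hcdf : ∀ t : ℝ, 0 < t → glmgaCdf σ a b t = H a (u t) / B := by
    intro t ht
    rw [glmgaCdf]
    exact cdf_aux ha hb (Real.rpow_pos_of_pos ht _)
  have htc : Tendsto (fun t : ℝ => t ^ c) (nhdsWithin 0 (Set.Ioi 0)) (nhds 0) := by
    have := (Real.continuousAt_rpow_const 0 c (Or.inr hcpos.le)).tendsto.mono_left
      (nhdsWithin_le_nhds (s := Set.Ioi (0:ℝ)))
    simpa [Real.zero_rpow hcpos.ne'] using this
  have hu_tendsto : Tendsto u (nhdsWithin 0 (Set.Ioi 0)) (nhdsWithin 0 (Set.Ioi 0)) := by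
    rw [tendsto_nhdsWithin_iff]
    constructor
    · have hnum : Tendsto (fun t : ℝ => 2 * b * t ^ c) (nhdsWithin 0 (Set.Ioi 0)) (nhds 0) := by
        simpa using htc.const_mul (2 * b)
      have hden : Tendsto (fun t : ℝ => 1 + 2 * b * t ^ c)
          (nhdsWithin 0 (Set.Ioi 0)) (nhds 1) := by
        simpa using hnum.const_add 1
      have hquot := hnum.div hden one_ne_zero
      rw [zero_div] at hquot
      refine hquot.congr' ?_
      filter_upwards [self_mem_nhdsWithin] with t ht
      have ht0 : (0:ℝ) < t := ht
      have htcpos : 0 < t ^ c := Real.rpow_pos_of_pos ht0 c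
      have hd1 : (1:ℝ) + 2 * b * t ^ c ≠ 0 := by positivity
      have hd2 : (t ^ c)⁻¹ + 2 * b ≠ 0 := by positivity
      simp only [Pi.div_apply, hu]
      rw [Real.rpow_neg ht0.le]
      field_simp
    · filter_upwards [self_mem_nhdsWithin] with t ht
      exact (hu_mem t ht).1
  have hmul : Tendsto (fun t : ℝ => t * y) (nhdsWithin 0 (Set.Ioi 0))
      (nhdsWithin 0 (Set.Ioi 0)) := by
    rw [tendsto_nhdsWithin_iff]
    constructor
    · have h := ((continuous_id.mul (continuous_const (y := y))).tendsto (0:ℝ)).mono_left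
        (nhdsWithin_le_nhds (s := Set.Ioi (0:ℝ)))
      simpa [Pi.mul_def] using h
    · filter_upwards [self_mem_nhdsWithin] with t ht
      exact mul_pos ht hy
  have hu_ty : Tendsto (fun t : ℝ => u (t * y)) (nhdsWithin 0 (Set.Ioi 0))
      (nhdsWithin 0 (Set.Ioi 0)) := hu_tendsto.comp hmul
  have hycpos : 0 < y ^ c := Real.rpow_pos_of_pos hy c
  have hR : Tendsto (fun t : ℝ => u (t * y) / u t) (nhdsWithin 0 (Set.Ioi 0))
      (nhds (y ^ c)) := by
    have hyn : (0:ℝ) < y ^ (-c) := Real.rpow_pos_of_pos hy _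
    have hnum : Tendsto (fun t : ℝ => 1 + 2 * b * t ^ c)
        (nhdsWithin 0 (Set.Ioi 0)) (nhds 1) := by
      simpa using (htc.const_mul (2 * b)).const_add 1
    have hden : Tendsto (fun t : ℝ => y ^ (-c) + 2 * b * t ^ c)
        (nhdsWithin 0 (Set.Ioi 0)) (nhds (y ^ (-c))) := by
      simpa using (htc.const_mul (2 * b)).const_add (y ^ (-c))
    have hquot := hnum.div hden hyn.ne'
    have hval : (1:ℝ) / y ^ (-c) = y ^ c := by
      rw [Real.rpow_neg hy.le, one_div, inv_inv]
    rw [hval] at hquot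
    refine hquot.congr' ?_
    filter_upwards [self_mem_nhdsWithin] with t ht
    have ht0 : (0:ℝ) < t := ht
    have htc0 : 0 < t ^ c := Real.rpow_pos_of_pos ht0 c
    have htyc : (t * y) ^ (-c) = t ^ (-c) * y ^ (-c) := Real.mul_rpow ht0.le hy.le
    have htneg : t ^ (-c) = (t ^ c)⁻¹ := Real.rpow_neg ht0.le c
    have hyneg : y ^ (-c) = (y ^ c)⁻¹ := Real.rpow_neg hy.le c
    simp only [Pi.div_apply, hu, htyc, htneg, hyneg]
    have h1 : (y ^ c)⁻¹ + 2 * b * t ^ c ≠ 0 := by positivity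
    have h2 : (t ^ c)⁻¹ * (y ^ c)⁻¹ + 2 * b ≠ 0 := by positivity
    have h3 : (t ^ c)⁻¹ + 2 * b ≠ 0 := by positivity
    field_simp
  have hG := G_tendsto ha
  have A1 : Tendsto (fun t : ℝ => H a (u (t * y)) / (u (t * y)) ^ a)
      (nhdsWithin 0 (Set.Ioi 0)) (nhds (1/a)) := hG.comp hu_ty
  have A2 : Tendsto (fun t : ℝ => (H a (u t) / (u t) ^ a)⁻¹)
      (nhdsWithin 0 (Set.Ioi 0)) (nhds (1/a)⁻¹) :=
    (hG.comp hu_tendsto).inv₀ (by positivity)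
  have A3 : Tendsto (fun t : ℝ => (u (t * y) / u t) ^ a)
      (nhdsWithin 0 (Set.Ioi 0)) (nhds ((y ^ c) ^ a)) :=
    ((Real.continuousAt_rpow_const _ a (Or.inl hycpos.ne')).tendsto).comp hR
  have hfinal := (A1.mul A2).mul A3
  have hval : (1/a) * (1/a)⁻¹ * (y ^ c) ^ a = y ^ (a / σ) := by
    rw [← Real.rpow_mul hy.le]
    have hca : c * a = a / σ := by rw [hc]; ring
    rw [hca]
    field_simp
  rw [hval] at hfinal
  refine hfinal.congr' ?_
  filter_upwards [self_mem_nhdsWithin] with t ht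
  have ht0 : (0:ℝ) < t := ht
  have hty : (0:ℝ) < t * y := mul_pos ht0 hy
  obtain ⟨hp0, hp1⟩ := hu_mem (t * y) hty
  obtain ⟨hq0, hq1⟩ := hu_mem t ht0
  have hHp : 0 < H a (u (t * y)) := H_pos ha hp0 hp1
  have hHq : 0 < H a (u t) := H_pos ha hq0 hq1
  have hpa : 0 < (u (t * y)) ^ a := Real.rpow_pos_of_pos hp0 a
  have hqa : 0 < (u t) ^ a := Real.rpow_pos_of_pos hq0 a
  rw [hcdf _ hty, hcdf _ ht0, Real.div_rpow hp0.le hq0.le]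
  rw [div_div_div_eq]
  field_simp
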